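/- Recursive computation of iterated upper envelopes (finite-horizon Theorem 4, upper part, for a single compatible precise chain bound): let {g_n}_{n≥0} and {h_n}_{n≥1} be functions 𝒳 → ℝ, define τ_1 := g_0 and τ_{n+1}(x_{1:n+1}) := h_n(x_1)·τ_n(x_{2:n+1}) + g_n(x_1). Define recursively Ῡ_1 := Ῡ̲_1 := g_0, Ῡ_{n+1} := h_n·𝟙_{h_n≥0}·[T̄ Ῡ_n] + h_n·𝟙_{h_n<0}·[T̲ Υ̲_n] + g_n and Υ̲_{n+1} := h_n·𝟙_{h_n≥0}·[T̲ Υ̲_n] + h_n·𝟙_{h_n<0}·[T̄ Ῡ_n] + g_n. Then for every row-stochastic matrix sequence T_1,…,T_n−1 with rows in 𝒯, and every x ∈ 𝒳, the expectation E[τ_n(X_{1:n}) | X_1 = x] of τ_n under the (possibly inhomogeneous) Markov chain with transition matrices T_1,…,T_{n−1} started at x satisfies Υ̲_n(x) ≤ E[τ_n(X_{1:n}) | X_1 = x] ≤ Ῡ_n(x). -/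

import Mathlib

open Finset Filter

/-- A probability mass function on a finite set, represented as a real-valued function. -/
def IsPMF {X : Type*} [Fintype X] (p : X → ℝ) : Prop :=
  (∀ y, 0 ≤ p y) ∧ ∑ y, p y = 1

/-- The upper transition operator associated with a family of sets of pmfs. -/
noncomputable def upperT {X : Type*} [Fintype X] (𝒯 : X → Set (X → ℝ))
    (f : X → ℝ) (x : X) : ℝ :=
  sSup ((fun p => ∑ y, p y * f y) '' 𝒯 x)

/-- The lower transition operator associated with a family of sets of pmfs. -/
noncomputable def lowerT {X : Type*} [Fintype X] (𝒯 : X → Set (X → ℝ))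
    (f : X → ℝ) (x : X) : ℝ :=
  sInf ((fun p => ∑ y, p y * f y) '' 𝒯 x)

/-!
Condition on the first transition: the expectation of `τ_{n+1}` from `x` is
`h_n(x) · ∑_y T_1(x, y) E[τ_n | X_1 = y] + g_n(x)`, where the inner expectations are
taken along the shifted chain `T_2, …, T_n`. By induction these inner expectations lie
between `Υ̲_n(y)` and `Ῡ_n(y)`, so their `T_1(x, ·)`-average lies between `T̲ Υ̲_n (x)`
and `T̄ Ῡ_n (x)`; multiplying by `h_n(x)` swaps the two bounds exactly when `h_n(x) < 0`.
-/

section PMF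

variable {X : Type*} [Fintype X]

lemma IsPMF.le_one {p : X → ℝ} (hp : IsPMF p) (y : X) : p y ≤ 1 :=
  hp.2 ▸ single_le_sum (fun y _ => hp.1 y) (mem_univ y)

lemma IsPMF.abs_sum_mul_le {p : X → ℝ} (hp : IsPMF p) (f : X → ℝ) :
    |∑ y, p y * f y| ≤ ∑ y, |f y| :=
  (abs_sum_le_sum_abs _ _).trans <| sum_le_sum fun y _ => by
    rw [abs_mul, abs_of_nonneg (hp.1 y)]
    exact mul_le_of_le_one_left (abs_nonneg _) (hp.le_one y)

lemma IsPMF.sum_mul_mono {p : X → ℝ} (hp : IsPMF p) {f f' : X → ℝ} (hf : f ≤ f') :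
    ∑ y, p y * f y ≤ ∑ y, p y * f' y :=
  sum_le_sum fun y _ => mul_le_mul_of_nonneg_left (hf y) (hp.1 y)

lemma IsPMF.sum_mul_mul_add {p : X → ℝ} (hp : IsPMF p) (a b : ℝ) (f : X → ℝ) :
    ∑ y, p y * (a * f y + b) = a * ∑ y, p y * f y + b := by
  simp only [mul_add, sum_add_distrib, ← sum_mul, hp.2, one_mul, mul_sum]
  exact congrArg (· + b) (sum_congr rfl fun _ _ => by ring)

variable {𝒯 : X → Set (X → ℝ)}

lemma sum_mul_le_upperT (hpmf : ∀ x, ∀ p ∈ 𝒯 x, IsPMF p) (f : X → ℝ) {x : X} {p : X → ℝ}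
    (hp : p ∈ 𝒯 x) : ∑ y, p y * f y ≤ upperT 𝒯 f x := by
  refine le_csSup ⟨∑ y, |f y|, ?_⟩ ⟨p, hp, rfl⟩
  rintro _ ⟨q, hq, rfl⟩
  exact (abs_le.mp ((hpmf x q hq).abs_sum_mul_le f)).2

lemma lowerT_le_sum_mul (hpmf : ∀ x, ∀ p ∈ 𝒯 x, IsPMF p) (f : X → ℝ) {x : X} {p : X → ℝ}
    (hp : p ∈ 𝒯 x) : lowerT 𝒯 f x ≤ ∑ y, p y * f y := by
  refine csInf_le ⟨-∑ y, |f y|, ?_⟩ ⟨p, hp, rfl⟩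
  rintro _ ⟨q, hq, rfl⟩
  exact (abs_le.mp ((hpmf x q hq).abs_sum_mul_le f)).1

end PMF

lemma signSplit_bounds_mul {a lo s hi : ℝ} (hlo : lo ≤ s) (hhi : s ≤ hi) :
    a * (if 0 ≤ a then 1 else 0) * lo + a * (if a < 0 then 1 else 0) * hi ≤ a * s ∧
      a * s ≤ a * (if 0 ≤ a then 1 else 0) * hi + a * (if a < 0 then 1 else 0) * lo := by
  by_cases ha : 0 ≤ a
  · simp only [if_pos ha, if_neg (not_lt.mpr ha), mul_one, mul_zero, zero_mul, add_zero]
    exact ⟨mul_le_mul_of_nonneg_left hlo ha, mul_le_mul_of_nonneg_left hhi ha⟩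
  · have ha' : a ≤ 0 := (not_le.mp ha).le
    simp only [if_neg ha, if_pos (not_le.mp ha), mul_one, mul_zero, zero_mul, zero_add]
    exact ⟨mul_le_mul_of_nonpos_left hhi ha', mul_le_mul_of_nonpos_left hlo ha'⟩

section MarkovChain

variable {X : Type*}

def pathWeight (Ts : ℕ → X → X → ℝ) (x : X) {m : ℕ} (z : Fin m → X) : ℝ :=
  ∏ k : Fin m, Ts k ((Fin.cons x z : Fin (m + 1) → X) k.castSucc)
    ((Fin.cons x z : Fin (m + 1) → X) k.succ)

lemma pathWeight_cons (Ts : ℕ → X → X → ℝ) (x y : X) {m : ℕ} (z : Fin m → X) :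
    pathWeight Ts x (Fin.cons y z : Fin (m + 1) → X) =
      Ts 0 x y * pathWeight (fun k => Ts (k + 1)) y z := by
  simp [pathWeight, Fin.prod_univ_succ]

variable [Fintype X]

lemma sum_fun_fin_succ {m : ℕ} (f : (Fin (m + 1) → X) → ℝ) :
    ∑ w : Fin (m + 1) → X, f w = ∑ y : X, ∑ z : Fin m → X, f (Fin.cons y z) :=
  (Fintype.sum_equiv (Fin.consEquiv fun _ => X) _ f fun _ => rfl).symm.trans
    (Fintype.sum_prod_type _)

/-- `E[f(X_{1:m+1}) | X_1 = x]` for the chain whose transition matrix `T_{k+1}` is `Ts k`. -/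
def pathExpect (Ts : ℕ → X → X → ℝ) {m : ℕ} (f : (Fin (m + 1) → X) → ℝ) (x : X) : ℝ :=
  ∑ z : Fin m → X, f (Fin.cons x z) * pathWeight Ts x z

lemma sum_pathWeight {Ts : ℕ → X → X → ℝ} (hTs : ∀ k x, IsPMF (Ts k x)) (m : ℕ) (x : X) :
    ∑ z : Fin m → X, pathWeight Ts x z = 1 := by
  induction m generalizing Ts x with
  | zero => simp [pathWeight]
  | succ m ih =>
    simp only [sum_fun_fin_succ, pathWeight_cons, ← mul_sum, ih fun k => hTs (k + 1), mul_one]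
    exact (hTs 0 x).2

lemma pathExpect_succ (Ts : ℕ → X → X → ℝ) {m : ℕ} (f : (Fin (m + 2) → X) → ℝ) (x : X) :
    pathExpect Ts f x =
      ∑ y, Ts 0 x y * pathExpect (fun k => Ts (k + 1)) (fun w => f (Fin.cons x w)) y := by
  simp only [pathExpect, sum_fun_fin_succ (fun z => f (Fin.cons x z) * pathWeight Ts x z),
    pathWeight_cons, mul_sum]
  exact sum_congr rfl fun _ _ => sum_congr rfl fun _ _ => by ring

lemma pathExpect_mul_add {Ts : ℕ → X → X → ℝ} (hTs : ∀ k x, IsPMF (Ts k x)) {m : ℕ}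
    (a b : ℝ) (f : (Fin (m + 1) → X) → ℝ) (x : X) :
    pathExpect Ts (fun w => a * f w + b) x = a * pathExpect Ts f x + b := by
  simp only [pathExpect, add_mul, sum_add_distrib, ← mul_sum, sum_pathWeight hTs, mul_one,
    mul_assoc]

end MarkovChain

theorem recursive_inference_bounds_general {X : Type*} [Fintype X] (𝒯 : X → Set (X → ℝ))
    (hpmf : ∀ x, ∀ p ∈ 𝒯 x, IsPMF p)
    (g h : ℕ → X → ℝ)
    (τ : (k : ℕ) → (Fin k → X) → ℝ)
    (hτ1 : ∀ x : Fin 1 → X, τ 1 x = g 0 (x 0))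
    (hτ : ∀ n : ℕ, 1 ≤ n → ∀ x : Fin (n + 1) → X,
      τ (n + 1) x = h n (x 0) * τ n (fun i => x i.succ) + g n (x 0))
    (U L : ℕ → X → ℝ)
    (hU1 : U 1 = g 0) (hL1 : L 1 = g 0)
    (hU : ∀ n : ℕ, 1 ≤ n → ∀ x : X,
      U (n + 1) x = h n x * (if 0 ≤ h n x then 1 else 0) * upperT 𝒯 (U n) x
        + h n x * (if h n x < 0 then 1 else 0) * lowerT 𝒯 (L n) x + g n x)
    (hL : ∀ n : ℕ, 1 ≤ n → ∀ x : X,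
      L (n + 1) x = h n x * (if 0 ≤ h n x then 1 else 0) * lowerT 𝒯 (L n) x
        + h n x * (if h n x < 0 then 1 else 0) * upperT 𝒯 (U n) x + g n x)
    (m : ℕ) (Ts : ℕ → X → X → ℝ)
    (hTs : ∀ k x, Ts k x ∈ 𝒯 x) (x : X) :
    L (m + 1) x ≤
      (∑ z : Fin m → X,
        τ (m + 1) (Fin.cons x z : Fin (m + 1) → X) *
          ∏ k : Fin m, Ts k ((Fin.cons x z : Fin (m + 1) → X) k.castSucc)
            ((Fin.cons x z : Fin (m + 1) → X) k.succ)) ∧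
    (∑ z : Fin m → X,
        τ (m + 1) (Fin.cons x z : Fin (m + 1) → X) *
          ∏ k : Fin m, Ts k ((Fin.cons x z : Fin (m + 1) → X) k.castSucc)
            ((Fin.cons x z : Fin (m + 1) → X) k.succ)) ≤
      U (m + 1) x := by
  change L (m + 1) x ≤ pathExpect Ts (τ (m + 1)) x ∧ pathExpect Ts (τ (m + 1)) x ≤ U (m + 1) x
  induction m generalizing Ts x with
  | zero => simp [pathExpect, pathWeight, hτ1, hU1, hL1]
  | succ m ih =>
    have hrows : ∀ k x, IsPMF (Ts k x) := fun k x => hpmf x _ (hTs k x)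
    have hτx : (fun w => τ (m + 2) (Fin.cons x w)) =
        fun w => h (m + 1) x * τ (m + 1) w + g (m + 1) x :=
      funext fun w => by simpa using hτ (m + 1) m.succ_pos (Fin.cons x w)
    set E := pathExpect (fun k => Ts (k + 1)) (τ (m + 1))
    have hE : pathExpect Ts (τ (m + 2)) x = h (m + 1) x * ∑ y, Ts 0 x y * E y + g (m + 1) x := by
      rw [pathExpect_succ, hτx]
      simp only [pathExpect_mul_add fun k => hrows (k + 1)]
      exact (hrows 0 x).sum_mul_mul_add _ _ E
    have hE_bounds := ih (fun k => Ts (k + 1)) (fun k => hTs (k + 1))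
    obtain ⟨hlo, hhi⟩ := signSplit_bounds_mul (a := h (m + 1) x)
      ((lowerT_le_sum_mul hpmf _ (hTs 0 x)).trans
        ((hrows 0 x).sum_mul_mono fun y => (hE_bounds y).1))
      (((hrows 0 x).sum_mul_mono fun y => (hE_bounds y).2).trans
        (sum_mul_le_upperT hpmf _ (hTs 0 x)))
    rw [hE, hU (m + 1) m.succ_pos, hL (m + 1) m.succ_pos]
    exact ⟨by linarith, by linarith⟩

theorem recursive_inference_bounds {X : Type*} [Fintype X] (𝒯 : X → Set (X → ℝ))
    (hne : ∀ x, (𝒯 x).Nonempty) (hpmf : ∀ x, ∀ p ∈ 𝒯 x, IsPMF p)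
    (g h : ℕ → X → ℝ)
    (τ : (k : ℕ) → (Fin k → X) → ℝ)
    (hτ1 : ∀ x : Fin 1 → X, τ 1 x = g 0 (x 0))
    (hτ : ∀ n : ℕ, 1 ≤ n → ∀ x : Fin (n + 1) → X,
      τ (n + 1) x = h n (x 0) * τ n (fun i => x i.succ) + g n (x 0))
    (U L : ℕ → X → ℝ)
    (hU1 : U 1 = g 0) (hL1 : L 1 = g 0)
    (hU : ∀ n : ℕ, 1 ≤ n → ∀ x : X,
      U (n + 1) x = h n x * (if 0 ≤ h n x then 1 else 0) * upperT 𝒯 (U n) x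
        + h n x * (if h n x < 0 then 1 else 0) * lowerT 𝒯 (L n) x + g n x)
    (hL : ∀ n : ℕ, 1 ≤ n → ∀ x : X,
      L (n + 1) x = h n x * (if 0 ≤ h n x then 1 else 0) * lowerT 𝒯 (L n) x
        + h n x * (if h n x < 0 then 1 else 0) * upperT 𝒯 (U n) x + g n x)
    (m : ℕ) (Ts : ℕ → X → X → ℝ)
    (hTs : ∀ k x, Ts k x ∈ 𝒯 x) (x : X) :
    L (m + 1) x ≤
      (∑ z : Fin m → X,
        τ (m + 1) (Fin.cons x z : Fin (m + 1) → X) *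
          ∏ k : Fin m, Ts k ((Fin.cons x z : Fin (m + 1) → X) k.castSucc)
            ((Fin.cons x z : Fin (m + 1) → X) k.succ)) ∧
    (∑ z : Fin m → X,
        τ (m + 1) (Fin.cons x z : Fin (m + 1) → X) *
          ∏ k : Fin m, Ts k ((Fin.cons x z : Fin (m + 1) → X) k.castSucc)
            ((Fin.cons x z : Fin (m + 1) → X) k.succ)) ≤
      U (m + 1) x :=
  recursive_inference_bounds_general 𝒯 hpmf g h τ hτ1 hτ U L hU1 hL1 hU hL m Ts hTs x
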